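/- arXiv:gr-qc/0407017 — 3 statements merged into one kernel-verified Lean document; each statement's English description precedes it below -/
import Mathlib

section
/- Let A, B be traceless anti-Hermitian 2×2 complex matrices (elements of su(2)) with tr(AB) = 0, and set g := exp(A), h := exp(B). Then g·h = h·g + h⁻¹·g + h·g⁻¹ − tr(h·g)·𝟙. -/
/-!
A traceless `2 × 2` matrix squares to a scalar (Cayley–Hamilton), so splitting the exponential
series into its even and odd parts gives `exp A = c + s A` and `exp (-A) = c - s A`. Hence
`g + g⁻¹ = tr g`, and `tr (A B) = 0` gives `2 tr (g h) = tr g tr h`. With these two relations the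
identity is a rearrangement of the polarized Cayley–Hamilton identity
`g h + h g = tr g • h + tr h • g + (tr (g h) - tr g tr h) • 1`.
-/

open Matrix NormedSpace
open scoped Nat

section ExpOfSquareScalar

variable {𝕂 : Type*} [RCLike 𝕂]

/-- For `d = w ^ 2` this is `cosh w` when `j = 0` and `sinh w / w` when `j = 1`. -/
noncomputable def expSeriesPart (j : ℕ) (d : 𝕂) : 𝕂 := ∑' k : ℕ, ((2 * k + j)! : 𝕂)⁻¹ * d ^ k

theorem hasSum_expSeriesPart (j : ℕ) (d : 𝕂) :
    HasSum (fun k : ℕ => ((2 * k + j)! : 𝕂)⁻¹ * d ^ k) (expSeriesPart j d) := by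
  refine (Summable.of_norm_bounded (Real.summable_pow_div_factorial ‖d‖) fun k => ?_).hasSum
  rw [norm_mul, norm_inv, norm_pow, RCLike.norm_natCast, div_eq_inv_mul]
  gcongr
  omega

variable {𝔸 : Type*} [Ring 𝔸] [Algebra 𝕂 𝔸] [TopologicalSpace 𝔸] [IsTopologicalRing 𝔸]
  [ContinuousSMul 𝕂 𝔸] [T2Space 𝔸]

theorem exp_eq_of_mul_self_eq_smul_one {x : 𝔸} {d : 𝕂} (hx : x * x = d • 1) :
    exp x = expSeriesPart 0 d • (1 : 𝔸) + expSeriesPart 1 d • x := by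
  have pow_even (k : ℕ) : x ^ (2 * k) = d ^ k • (1 : 𝔸) := by
    rw [pow_mul, sq, hx, smul_pow, one_pow]
  have hasSum_even :
      HasSum (fun k => ((2 * k)! : 𝕂)⁻¹ • x ^ (2 * k)) (expSeriesPart 0 d • 1) := by
    refine ((hasSum_expSeriesPart 0 d).smul_const (1 : 𝔸)).congr_fun fun k => ?_
    rw [pow_even, smul_smul]
    rfl
  have hasSum_odd :
      HasSum (fun k => ((2 * k + 1)! : 𝕂)⁻¹ • x ^ (2 * k + 1)) (expSeriesPart 1 d • x) := by
    refine ((hasSum_expSeriesPart 1 d).smul_const x).congr_fun fun k => ?_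
    rw [pow_succ, pow_even, smul_mul_assoc, one_mul, smul_smul]
  rw [exp_eq_tsum 𝕂]
  exact (HasSum.even_add_odd (f := fun n => (n ! : 𝕂)⁻¹ • x ^ n) hasSum_even hasSum_odd).tsum_eq

end ExpOfSquareScalar

namespace Matrix

section CommRing

variable {R : Type*} [CommRing R]

theorem mul_self_fin_two (A : Matrix (Fin 2) (Fin 2) R) :
    A * A = A.trace • A - A.det • (1 : Matrix (Fin 2) (Fin 2) R) := by
  ext i j
  fin_cases i <;> fin_cases j <;>
    simp only [mul_apply, Fin.sum_univ_two, trace_fin_two, det_fin_two, sub_apply, smul_apply,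
      smul_eq_mul, one_apply_eq, one_apply_ne, ne_eq, one_ne_zero, zero_ne_one,
      not_false_eq_true, Fin.isValue, Fin.mk_one, Fin.zero_eta, mul_zero, mul_one] <;> ring

theorem mul_add_mul_fin_two (A B : Matrix (Fin 2) (Fin 2) R) :
    A * B + B * A = A.trace • B + B.trace • A
      + ((A * B).trace - A.trace * B.trace) • (1 : Matrix (Fin 2) (Fin 2) R) := by
  ext i j
  fin_cases i <;> fin_cases j <;>
    simp only [mul_apply, Fin.sum_univ_two, trace_fin_two, add_apply, smul_apply,
      smul_eq_mul, one_apply_eq, one_apply_ne, ne_eq, one_ne_zero, zero_ne_one,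
      not_false_eq_true, Fin.isValue, Fin.mk_one, Fin.zero_eta, mul_zero, mul_one] <;> ring

theorem trace_smul_one_add_smul_fin_two {A : Matrix (Fin 2) (Fin 2) R} (hA : A.trace = 0)
    (c s : R) : (c • 1 + s • A).trace = 2 * c := by
  simp [hA, mul_comm]

theorem mul_eq_of_two_mul_trace_mul_eq_fin_two {g h : Matrix (Fin 2) (Fin 2) R}
    (hg : g + g⁻¹ = g.trace • 1) (hh : h + h⁻¹ = h.trace • 1)
    (hgh : 2 * (g * h).trace = g.trace * h.trace) :
    g * h = h * g + h⁻¹ * g + h * g⁻¹ - (h * g).trace • (1 : Matrix (Fin 2) (Fin 2) R) := by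
  rw [eq_sub_of_add_eq' hg, eq_sub_of_add_eq' hh, trace_mul_comm h g]
  simp only [sub_mul, mul_sub, smul_mul_assoc, mul_smul_comm, one_mul, mul_one]
  linear_combination (norm := module)
    mul_add_mul_fin_two g h + hgh • (1 : Matrix (Fin 2) (Fin 2) R)

end CommRing

variable {𝕂 : Type*} [RCLike 𝕂]

theorem exists_exp_eq_and_inv_exp_eq_fin_two {A : Matrix (Fin 2) (Fin 2) 𝕂} (hA : A.trace = 0) :
    ∃ c s : 𝕂, exp A = c • 1 + s • A ∧ (exp A)⁻¹ = c • 1 - s • A := by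
  have hsq : A * A = (-A.det) • (1 : Matrix (Fin 2) (Fin 2) 𝕂) := by
    rw [mul_self_fin_two, hA, zero_smul, zero_sub, neg_smul]
  have hsq_neg : -A * -A = (-A.det) • (1 : Matrix (Fin 2) (Fin 2) 𝕂) := by
    rw [neg_mul_neg, hsq]
  refine ⟨_, _, exp_eq_of_mul_self_eq_smul_one hsq, ?_⟩
  rw [← Matrix.exp_neg, exp_eq_of_mul_self_eq_smul_one hsq_neg, smul_neg, sub_eq_add_neg]

theorem exp_add_inv_exp_fin_two {A : Matrix (Fin 2) (Fin 2) 𝕂} (hA : A.trace = 0) :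
    exp A + (exp A)⁻¹ = (exp A).trace • 1 := by
  obtain ⟨c, s, hexp, hexp_inv⟩ := exists_exp_eq_and_inv_exp_eq_fin_two hA
  rw [hexp_inv, hexp, trace_smul_one_add_smul_fin_two hA]
  module

theorem two_mul_trace_exp_mul_exp_fin_two {A B : Matrix (Fin 2) (Fin 2) 𝕂} (hA : A.trace = 0)
    (hB : B.trace = 0) (hAB : (A * B).trace = 0) :
    2 * (exp A * exp B).trace = (exp A).trace * (exp B).trace := by
  obtain ⟨c, s, hexpA, -⟩ := exists_exp_eq_and_inv_exp_eq_fin_two hA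
  obtain ⟨e, t, hexpB, -⟩ := exists_exp_eq_and_inv_exp_eq_fin_two hB
  rw [hexpA, hexpB, trace_smul_one_add_smul_fin_two hA, trace_smul_one_add_smul_fin_two hB]
  simp only [mul_add, add_mul, mul_smul_comm, smul_mul_assoc, mul_one, one_mul, smul_add,
    trace_add, trace_smul, trace_one, Fintype.card_fin, Nat.cast_ofNat, smul_eq_mul, hA, hB, hAB,
    mul_zero, add_zero]
  ring

end Matrix

theorem holonomy_almost_commute_general (A B : Matrix (Fin 2) (Fin 2) ℂ)
    (hA' : A.trace = 0) (hB' : B.trace = 0)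
    (hAB : (A * B).trace = 0)
    (g h : Matrix (Fin 2) (Fin 2) ℂ)
    (hg : g = NormedSpace.exp A) (hh : h = NormedSpace.exp B) :
    g * h = h * g + h⁻¹ * g + h * g⁻¹ - (h * g).trace • (1 : Matrix (Fin 2) (Fin 2) ℂ) := by
  subst hg hh
  exact mul_eq_of_two_mul_trace_mul_eq_fin_two (exp_add_inv_exp_fin_two hA')
    (exp_add_inv_exp_fin_two hB') (two_mul_trace_exp_mul_exp_fin_two hA' hB' hAB)

/-- Lemma 1 of the paper: for A, B ∈ su(2) with tr(AB) = 0 and g = exp A, h = exp B,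
one has g h = h g + h⁻¹ g + h g⁻¹ − tr(hg) 𝟙. -/
theorem holonomy_almost_commute (A B : Matrix (Fin 2) (Fin 2) ℂ)
    (hA : Aᴴ = -A) (hA' : A.trace = 0) (hB : Bᴴ = -B) (hB' : B.trace = 0)
    (hAB : (A * B).trace = 0)
    (g h : Matrix (Fin 2) (Fin 2) ℂ)
    (hg : g = NormedSpace.exp A) (hh : h = NormedSpace.exp B) :
    g * h = h * g + h⁻¹ * g + h * g⁻¹ - (h * g).trace • (1 : Matrix (Fin 2) (Fin 2) ℂ) :=
  holonomy_almost_commute_general A B hA' hB' hAB g h hg hh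
end

section
/- With A = a·τ_1 and B = b·τ_2 for real a, b (so tr(AB) = 0), the product of holonomies satisfies exp(a τ_1)·exp(b τ_2) = exp(b τ_2)·exp(a τ_1) + exp(-b τ_2)·exp(a τ_1) + exp(b τ_2)·exp(-a τ_1) − tr(exp(b τ_2)·exp(a τ_1))·𝟙. -/
open Matrix

noncomputable section

/-- The Pauli matrices. -/
def σ : Fin 3 → Matrix (Fin 2) (Fin 2) ℂ
  | 0 => !![0, 1; 1, 0]
  | 1 => !![0, -Complex.I; Complex.I, 0]
  | 2 => !![1, 0; 0, -1]

/-- The su(2) basis matrices τ_i = -(i/2) σ_i. -/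
def τ (i : Fin 3) : Matrix (Fin 2) (Fin 2) ℂ := (-(Complex.I / 2)) • σ i

end

/-!
Since `(2 • τ i)² = -1`, every factor has the form
`exp (c • τ i) = cos (c/2) + sin (c/2) • (2 • τ i)`, and `exp (-c • τ i)` is obtained by flipping
the sign of the sine. Because `τ 0` and `τ 1`
anticommute, the two orderings of a product of such elements differ only in the sign of the
`τ 0 * τ 1` term, and the identity becomes a polynomial identity in the cosines and sines; the
trace term is `2 cos (a/2) cos (b/2)` because `τ 0`, `τ 1` and `τ 1 * τ 0` are traceless.
-/

theorem NormedSpace.exp_smul_of_mul_self_eq_neg_one {A : Type*} [NormedRing A]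
    [NormedAlgebra ℝ A] [Algebra ℚ A] {J : A} (hJ : J * J = -1) (t : ℝ) :
    NormedSpace.exp (t • J) = Real.cos t • (1 : A) + Real.sin t • J := by
  let φ := Complex.liftAux J hJ
  have hφ : Continuous φ := φ.toLinearMap.continuous_of_finiteDimensional
  have hexp := NormedSpace.map_exp φ hφ (t * Complex.I)
  rw [← Complex.exp_eq_exp_ℂ, Complex.exp_mul_I] at hexp
  simpa [φ, Complex.liftAux_apply, Algebra.algebraMap_eq_smul_one, Complex.cos_ofReal_re,
    Complex.sin_ofReal_re] using hexp.symm

-- `c • 1 - s • J` plays the role of the conjugate of `c • 1 + s • J`: its inverse when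
-- `J * J = -1` and `c ^ 2 + s ^ 2 = 1`.
theorem mul_eq_mul_add_conj_mul_add_mul_conj {K A : Type*} [CommRing K] [Ring A] [Algebra K A]
    {J₁ J₂ : A} (h : J₁ * J₂ = -(J₂ * J₁)) (c₁ s₁ c₂ s₂ : K) :
    (c₁ • 1 + s₁ • J₁) * (c₂ • 1 + s₂ • J₂) =
      (c₂ • 1 + s₂ • J₂) * (c₁ • 1 + s₁ • J₁) + (c₂ • 1 - s₂ • J₂) * (c₁ • 1 + s₁ • J₁)
        + (c₂ • 1 + s₂ • J₂) * (c₁ • 1 - s₁ • J₁) - (2 * c₁ * c₂) • (1 : A) := by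
  simp only [add_mul, mul_add, sub_mul, mul_sub, smul_mul_smul, one_mul, mul_one, h]
  module

theorem Matrix.trace_add_smul_mul_add_smul {n K R : Type*} [Fintype n] [DecidableEq n]
    [CommRing K] [CommRing R] [Algebra K R] {J₁ J₂ : Matrix n n R} (h₁ : J₁.trace = 0)
    (h₂ : J₂.trace = 0) (h₁₂ : (J₁ * J₂).trace = 0) (c₁ s₁ c₂ s₂ : K) :
    ((c₁ • 1 + s₁ • J₁) * (c₂ • 1 + s₂ • J₂)).trace = (Fintype.card n * (c₁ * c₂)) • (1 : R) := by
  simp only [add_mul, mul_add, smul_mul_smul, one_mul, mul_one, trace_add, trace_smul, trace_one,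
    h₁, h₂, h₁₂, smul_zero, add_zero]
  simp only [Algebra.smul_def, map_mul, map_natCast, mul_one]
  ring

theorem τ_mul_τ_of_ne {i j : Fin 3} (h : i ≠ j) : τ i * τ j = -(τ j * τ i) := by
  fin_cases i <;> fin_cases j <;> simp only [ne_eq, not_true_eq_false] at h <;> ext k l <;>
    fin_cases k <;> fin_cases l <;> simp [τ, σ] <;> ring

theorem trace_τ (i : Fin 3) : (τ i).trace = 0 := by
  fin_cases i <;> simp [τ, σ, trace_fin_two]

theorem trace_τ_mul_τ_of_ne {i j : Fin 3} (h : i ≠ j) : (τ i * τ j).trace = 0 := by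
  fin_cases i <;> fin_cases j <;> simp only [ne_eq, not_true_eq_false] at h <;>
    simp [τ, σ, trace_fin_two]

theorem two_smul_τ_mul_self (i : Fin 3) : (2 • τ i) * (2 • τ i) = -1 := by
  ext k l; fin_cases i <;> fin_cases k <;> fin_cases l <;> simp [τ, σ] <;> ring_nf <;> simp

theorem exp_ofReal_smul_τ (c : ℝ) (i : Fin 3) :
    NormedSpace.exp ((c : ℂ) • τ i) = Real.cos (c / 2) • 1 + Real.sin (c / 2) • (2 • τ i) := by
  let : NormedRing (Matrix (Fin 2) (Fin 2) ℂ) := Matrix.linftyOpNormedRing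
  let : NormedAlgebra ℝ (Matrix (Fin 2) (Fin 2) ℂ) := Matrix.linftyOpNormedAlgebra
  rw [← NormedSpace.exp_smul_of_mul_self_eq_neg_one (two_smul_τ_mul_self i)]
  congr 1
  rw [two_smul, smul_add, ← add_smul, add_halves, Complex.coe_smul]

/-- Explicit special case of Lemma 1: with A = a τ_1, B = b τ_2,
exp(a τ₁) exp(b τ₂) = exp(b τ₂) exp(a τ₁) + exp(−b τ₂) exp(a τ₁) + exp(b τ₂) exp(−a τ₁)
  − tr(exp(b τ₂) exp(a τ₁)) 𝟙. -/
theorem holonomy_almost_commute_explicit (a b : ℝ) :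
    NormedSpace.exp ((a : ℂ) • τ 0) * NormedSpace.exp ((b : ℂ) • τ 1) =
      NormedSpace.exp ((b : ℂ) • τ 1) * NormedSpace.exp ((a : ℂ) • τ 0)
      + NormedSpace.exp ((-b : ℂ) • τ 1) * NormedSpace.exp ((a : ℂ) • τ 0)
      + NormedSpace.exp ((b : ℂ) • τ 1) * NormedSpace.exp ((-a : ℂ) • τ 0)
      - (NormedSpace.exp ((b : ℂ) • τ 1) * NormedSpace.exp ((a : ℂ) • τ 0)).trace
          • (1 : Matrix (Fin 2) (Fin 2) ℂ) := by
  have hτ : (2 • τ 0) * (2 • τ 1) = -((2 • τ 1) * (2 • τ 0) : Matrix (Fin 2) (Fin 2) ℂ) := by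
    rw [smul_mul_smul, smul_mul_smul, τ_mul_τ_of_ne (by decide), smul_neg]
  have htr : ∀ i, (2 • τ i).trace = 0 := fun i ↦ by rw [trace_smul, trace_τ, smul_zero]
  have htr₁₀ : ((2 • τ 1) * (2 • τ 0)).trace = 0 := by
    rw [smul_mul_smul, trace_smul, trace_τ_mul_τ_of_ne (by decide), smul_zero]
  rw [← Complex.ofReal_neg, ← Complex.ofReal_neg]
  simp only [exp_ofReal_smul_τ, neg_div, Real.cos_neg, Real.sin_neg, neg_smul, ← sub_eq_add_neg]
  rw [trace_add_smul_mul_add_smul (htr 1) (htr 0) htr₁₀, smul_assoc, one_smul, Fintype.card_fin]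
  convert mul_eq_mul_add_conj_mul_add_mul_conj hτ _ _ _ _ using 3
  push_cast
  ring
end

section
/- For any traceless anti-Hermitian 2×2 matrices A, B with tr(AB)=0, there exists U ∈ SU(2) and real numbers a, b such that U·A·U⁻¹ = a·τ_1 and U·B·U⁻¹ = b·τ_2. -/
/-!
Diagonalize `i A` by a special unitary matrix: `A` becomes a real multiple of `τ 2`. If that
multiple is nonzero, `tr (A B) = 0` forces the conjugated `B` to be off-diagonal; if it is zero,
diagonalize `B` instead and move it off the diagonal by the quarter turn
`(1/√2) [[1, -1], [1, 1]]`, which conjugates `τ 2` to `τ 0` and fixes `τ 1`. A diagonal phase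
`diag (u, ū)` commutes with `τ 2` and multiplies the off-diagonal entry `q` by `u²`; choosing
`u² = e^{-i arg q}` makes it real, i.e. turns `B` into a multiple of `τ 1`. A last quarter turn
then sends `τ 2` to `τ 0`.
-/

open Matrix

noncomputable section

open Complex ComplexConjugate

section Conjugation

variable {n : Type*} [Fintype n]

lemma conjugate_mul (P Q X : Matrix n n ℂ) :
    P * Q * X * (P * Q)ᴴ = P * (Q * X * Qᴴ) * Pᴴ := by
  simp only [conjTranspose_mul, mul_assoc]

lemma conjTranspose_conjugate (U X : Matrix n n ℂ) : (U * X * Uᴴ)ᴴ = U * Xᴴ * Uᴴ := by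
  simp only [conjTranspose_mul, conjTranspose_conjTranspose, mul_assoc]

variable [DecidableEq n] {U : Matrix n n ℂ}

lemma trace_conjugate (hU : U ∈ unitaryGroup n ℂ) (X : Matrix n n ℂ) :
    (U * X * Uᴴ).trace = X.trace := by
  rw [trace_mul_cycle, ← star_eq_conjTranspose, hU.1, one_mul]

lemma conjugate_mul_conjugate (hU : U ∈ unitaryGroup n ℂ) (X Y : Matrix n n ℂ) :
    U * X * Uᴴ * (U * Y * Uᴴ) = U * (X * Y) * Uᴴ := by
  have hU' : Uᴴ * U = 1 := hU.1
  simp only [mul_assoc, ← mul_assoc Uᴴ U, hU', one_mul]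

end Conjugation

section Diagonalization

variable {n : Type*} [Fintype n] [DecidableEq n]

lemma diagonal_mem_unitaryGroup {d : n → ℂ} (hd : ∀ i, d i ∈ unitary ℂ) :
    diagonal d ∈ unitaryGroup n ℂ := by
  rw [mem_unitaryGroup_iff', star_eq_conjTranspose, diagonal_conjTranspose, diagonal_mul_diagonal,
    ← diagonal_one]
  exact congrArg diagonal (funext fun i => (hd i).1)

lemma diagonal_conjugate_diagonal {d : n → ℂ} (hd : ∀ i, d i ∈ unitary ℂ) (e : n → ℂ) :
    diagonal d * diagonal e * (diagonal d)ᴴ = diagonal e := by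
  rw [diagonal_conjTranspose, diagonal_mul_diagonal, diagonal_mul_diagonal]
  congr 1
  funext i
  rw [Pi.star_apply, mul_right_comm, (hd i).2, one_mul]

lemma exists_diagonal_mul_mem_specialUnitaryGroup [Nonempty n] {V : Matrix n n ℂ}
    (hV : V ∈ unitaryGroup n ℂ) :
    ∃ d : n → ℂ, (∀ i, d i ∈ unitary ℂ) ∧ diagonal d * V ∈ specialUnitaryGroup n ℂ := by
  have hdet := det_of_mem_unitary hV
  set i₀ := Classical.arbitrary n
  let d := Function.update (1 : n → ℂ) i₀ (star V.det)
  have hd : ∀ i, d i ∈ unitary ℂ := by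
    intro i
    by_cases h : i = i₀
    · subst h; simpa [d] using Unitary.star_mem hdet
    · simp [d, h]
  refine ⟨d, hd, mem_specialUnitaryGroup_iff.2 ⟨mul_mem (diagonal_mem_unitaryGroup hd) hV, ?_⟩⟩
  rw [det_mul, det_diagonal, Finset.prod_update_of_mem (Finset.mem_univ _)]
  simpa using hdet.1

lemma Matrix.IsHermitian.exists_specialUnitary_conjugate_eq_diagonal [Nonempty n]
    {H : Matrix n n ℂ} (hH : H.IsHermitian) :
    ∃ U ∈ specialUnitaryGroup n ℂ, U * H * Uᴴ = diagonal (ofReal ∘ hH.eigenvalues) := by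
  set V := (hH.eigenvectorUnitary : Matrix n n ℂ)
  have hVH : Vᴴ * H * V = diagonal (ofReal ∘ hH.eigenvalues) := by
    have := hH.conjStarAlgAut_star_eigenvectorUnitary
    rwa [Unitary.conjStarAlgAut_star_apply] at this
  obtain ⟨d, hd, hU⟩ :=
    exists_diagonal_mul_mem_specialUnitaryGroup (Unitary.star_mem hH.eigenvectorUnitary.2)
  refine ⟨_, hU, ?_⟩
  rw [conjugate_mul, star_eq_conjTranspose, conjTranspose_conjTranspose, hVH,
    diagonal_conjugate_diagonal hd]

end Diagonalization

lemma exists_specialUnitary_conjugate_eq_smul_tau_two {A : Matrix (Fin 2) (Fin 2) ℂ}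
    (hA : Aᴴ = -A) (hA' : A.trace = 0) :
    ∃ U ∈ specialUnitaryGroup (Fin 2) ℂ, ∃ c : ℝ, U * A * Uᴴ = (c : ℂ) • τ 2 := by
  have hH : (I • A).IsHermitian := by
    rw [IsHermitian, conjTranspose_smul, hA, star_def, conj_I, neg_smul, smul_neg, neg_neg]
  obtain ⟨U, hU, hUH⟩ := hH.exists_specialUnitary_conjugate_eq_diagonal
  have hsum : hH.eigenvalues 0 + hH.eigenvalues 1 = 0 := by
    have := congrArg trace hUH
    rw [trace_conjugate hU.1, trace_smul, hA', smul_zero, trace_diagonal, Fin.sum_univ_two,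
      Function.comp_apply, Function.comp_apply] at this
    exact_mod_cast this.symm
  have hUA : U * A * Uᴴ = -I • diagonal (ofReal ∘ hH.eigenvalues) := by
    rw [← hUH, Matrix.mul_smul, Matrix.smul_mul, smul_smul, neg_mul, I_mul_I, neg_neg, one_smul]
  refine ⟨U, hU, 2 * hH.eigenvalues 0, ?_⟩
  rw [hUA]
  ext i j; fin_cases i <;> fin_cases j <;> simp [τ, σ, eq_neg_of_add_eq_zero_right hsum] <;> ring

lemma eq_offDiag_of_trace_tau_two_mul_eq_zero {X : Matrix (Fin 2) (Fin 2) ℂ} (hX : Xᴴ = -X)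
    (hX' : X.trace = 0) (h : (τ 2 * X).trace = 0) : X = !![0, X 0 1; -star (X 0 1), 0] := by
  rw [trace_fin_two] at hX'
  have h00 : X 0 0 = 0 := by
    simp [trace_fin_two, τ, σ, vecMul, dotProduct, Fin.sum_univ_two] at h
    linear_combination I * h + hX' / 2 + (X 0 0 - X 1 1) / 2 * I_sq
  have h10 : X 1 0 = -star (X 0 1) := by
    simpa using congrArg star (congrFun (congrFun hX 0) 1)
  ext i j; fin_cases i <;> fin_cases j <;> simp [h00, h10]
  linear_combination hX' - h00

def quarterTurn : Matrix (Fin 2) (Fin 2) ℂ := ((Real.sqrt 2)⁻¹ : ℝ) • !![1, -1; 1, 1]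

lemma ofReal_inv_sqrt_two_sq : (((Real.sqrt 2)⁻¹ : ℝ) : ℂ) ^ 2 = 2⁻¹ := by
  rw [← ofReal_pow, inv_pow, Real.sq_sqrt zero_le_two]; norm_num

lemma quarterTurn_mem_specialUnitaryGroup : quarterTurn ∈ specialUnitaryGroup (Fin 2) ℂ := by
  refine ⟨mem_unitaryGroup_iff.2 ?_, ?_⟩
  · ext i j; fin_cases i <;> fin_cases j <;>
      simp [quarterTurn, mul_apply, Fin.sum_univ_two, -ofReal_inv] <;>
      linear_combination 2 * ofReal_inv_sqrt_two_sq
  · simp [quarterTurn, det_fin_two, -ofReal_inv]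
    linear_combination 2 * ofReal_inv_sqrt_two_sq

lemma quarterTurn_conjugate_tau_two : quarterTurn * τ 2 * quarterTurnᴴ = τ 0 := by
  ext i j; fin_cases i <;> fin_cases j <;>
    simp [quarterTurn, τ, σ, mul_apply, Fin.sum_univ_two, -ofReal_inv] <;>
    linear_combination -I * ofReal_inv_sqrt_two_sq

lemma quarterTurn_conjugate_tau_one : quarterTurn * τ 1 * quarterTurnᴴ = τ 1 := by
  ext i j; fin_cases i <;> fin_cases j <;>
    simp [quarterTurn, τ, σ, mul_apply, Fin.sum_univ_two, -ofReal_inv]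
  · linear_combination I ^ 2 * ofReal_inv_sqrt_two_sq
  · linear_combination -I ^ 2 * ofReal_inv_sqrt_two_sq

lemma exists_specialUnitary_conjugate_eq_smul_tau_two_and_offDiag
    {A B : Matrix (Fin 2) (Fin 2) ℂ} (hA : Aᴴ = -A) (hA' : A.trace = 0) (hB : Bᴴ = -B)
    (hB' : B.trace = 0) (hAB : (A * B).trace = 0) :
    ∃ U ∈ specialUnitaryGroup (Fin 2) ℂ, ∃ (c : ℝ) (q : ℂ),
      U * A * Uᴴ = (c : ℂ) • τ 2 ∧ U * B * Uᴴ = !![0, q; -star q, 0] := by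
  obtain ⟨U, hU, c, hUA⟩ := exists_specialUnitary_conjugate_eq_smul_tau_two hA hA'
  have hX : (U * B * Uᴴ)ᴴ = -(U * B * Uᴴ) := by
    rw [conjTranspose_conjugate, hB, Matrix.mul_neg, Matrix.neg_mul]
  have hX' : (U * B * Uᴴ).trace = 0 := by rw [trace_conjugate hU.1, hB']
  rcases eq_or_ne c 0 with rfl | hc
  · obtain ⟨V, hV, c', hVX⟩ := exists_specialUnitary_conjugate_eq_smul_tau_two hX hX'
    refine ⟨quarterTurn * V * U, mul_mem (mul_mem quarterTurn_mem_specialUnitaryGroup hV) hU,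
      0, -(I / 2) * c', ?_, ?_⟩
    · rw [conjugate_mul, conjugate_mul, hUA]
      simp
    · rw [conjugate_mul, conjugate_mul, hVX, Matrix.mul_smul, Matrix.smul_mul,
        quarterTurn_conjugate_tau_two]
      ext i j; fin_cases i <;> fin_cases j <;> simp [τ, σ] <;> ring
  · refine ⟨U, hU, c, _, hUA, eq_offDiag_of_trace_tau_two_mul_eq_zero hX hX' ?_⟩
    have h : ((c : ℂ) • τ 2 * (U * B * Uᴴ)).trace = 0 := by
      rw [← hUA, conjugate_mul_conjugate hU.1, trace_conjugate hU.1, hAB]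
    rw [Matrix.smul_mul, trace_smul, smul_eq_zero] at h
    exact h.resolve_left (ofReal_ne_zero.2 hc)

lemma exists_unitary_mul_self_mul_eq_norm (q : ℂ) : ∃ u ∈ unitary ℂ, u * u * q = ‖q‖ := by
  refine ⟨exp (-(arg q / 2 * I)), ?_, ?_⟩
  · rw [Unitary.mem_iff_star_mul_self, star_def, ← exp_conj, ← exp_add]
    simp [conj_ofReal, map_ofNat]
  · calc exp (-(arg q / 2 * I)) * exp (-(arg q / 2 * I)) * q
        = exp (-(arg q * I)) * (‖q‖ * exp (arg q * I)) := by
          rw [← exp_add, norm_mul_exp_arg_mul_I]; ring_nf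
      _ = ‖q‖ := by rw [mul_left_comm, ← exp_add, neg_add_cancel, exp_zero, mul_one]

lemma tau_two_eq_diagonal : τ 2 = diagonal ![-(I / 2), I / 2] := by
  ext i j; fin_cases i <;> fin_cases j <;> simp [τ, σ]

lemma exists_specialUnitary_fixing_tau_two_conjugate_offDiag_eq_smul_tau_one (q : ℂ) :
    ∃ D ∈ specialUnitaryGroup (Fin 2) ℂ, D * τ 2 * Dᴴ = τ 2 ∧
      ∃ r : ℝ, D * !![0, q; -star q, 0] * Dᴴ = (r : ℂ) • τ 1 := by
  obtain ⟨u, hu, huq⟩ := exists_unitary_mul_self_mul_eq_norm q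
  have hd : ∀ i, ![u, star u] i ∈ unitary ℂ := by
    intro i; fin_cases i
    · exact hu
    · exact Unitary.star_mem hu
  refine ⟨diagonal ![u, star u], ⟨diagonal_mem_unitaryGroup hd, ?_⟩, ?_, -2 * ‖q‖, ?_⟩
  · simpa [det_fin_two] using hu.2
  · rw [tau_two_eq_diagonal, diagonal_conjugate_diagonal hd]
  · have huq' : conj u * conj u * conj q = ‖q‖ := by
      simpa using congrArg conj huq
    ext i j; fin_cases i <;> fin_cases j <;> simp [τ, σ, diagonal, mul_apply, Fin.sum_univ_two]
    · linear_combination huq + ‖q‖ * I_sq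
    · linear_combination -huq' - ‖q‖ * I_sq

/-- Any two perpendicular elements of su(2) can be simultaneously rotated by an SU(2)
conjugation to multiples of τ₁ and τ₂. -/
theorem conj_to_tau1_tau2 (A B : Matrix (Fin 2) (Fin 2) ℂ)
    (hA : Aᴴ = -A) (hA' : A.trace = 0) (hB : Bᴴ = -B) (hB' : B.trace = 0)
    (hAB : (A * B).trace = 0) :
    ∃ U : Matrix (Fin 2) (Fin 2) ℂ, Uᴴ * U = 1 ∧ U.det = 1 ∧
      ∃ a b : ℝ, U * A * U⁻¹ = (a : ℂ) • τ 0 ∧ U * B * U⁻¹ = (b : ℂ) • τ 1 := by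
  obtain ⟨U, hU, c, q, hUA, hUB⟩ :=
    exists_specialUnitary_conjugate_eq_smul_tau_two_and_offDiag hA hA' hB hB' hAB
  obtain ⟨D, hD, hDτ, r, hDq⟩ :=
    exists_specialUnitary_fixing_tau_two_conjugate_offDiag_eq_smul_tau_one q
  set W := quarterTurn * D * U
  have hW : W ∈ specialUnitaryGroup (Fin 2) ℂ :=
    mul_mem (mul_mem quarterTurn_mem_specialUnitaryGroup hD) hU
  have hWW : Wᴴ * W = 1 := hW.1.1
  refine ⟨W, hWW, hW.2, c, r, ?_, ?_⟩ <;> rw [inv_eq_left_inv hWW, conjugate_mul, conjugate_mul]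
  · rw [hUA, Matrix.mul_smul, Matrix.smul_mul, hDτ, Matrix.mul_smul, Matrix.smul_mul,
      quarterTurn_conjugate_tau_two]
  · rw [hUB, hDq, Matrix.mul_smul, Matrix.smul_mul, quarterTurn_conjugate_tau_one]
end
end
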